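/- Assume the TBT matrix T is invertible. Then for all complex μ1, μ2 not in {i/2, −i/2}: u(μ) = ((μ1 − i/2)/(μ1 + i/2))^n · ((μ2 − i/2)/(μ2 + i/2))^m · û(μ)^τ · diag{J_{2m}U_{2m}, J_{2n}U_{2n}}, where ^τ denotes the transpose (without conjugation). -/

import Mathlib

open Matrix

noncomputable section

/-- The scalar sequence `a_r`: `0` for `r < 0`, `i/2` for `r = 0`, `i` for `r > 0`. -/
def aC (r : ℤ) : ℂ := if r < 0 then 0 else if r = 0 then Complex.I / 2 else Complex.I

/-- `A_1`: block matrix `{𝒜_{1,p−q}}` with blocks `0`, `(i/2)I_m`, `i·I_m`. -/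
def A1 (m n : ℕ) : Matrix (Fin n × Fin m) (Fin n × Fin m) ℂ :=
  Matrix.of fun r c => if r.2 = c.2 then aC (((r.1 : ℕ) : ℤ) - ((c.1 : ℕ) : ℤ)) else 0

/-- `A_2 = diag{𝒜_{2,0}, …, 𝒜_{2,0}}`. -/
def A2 (m n : ℕ) : Matrix (Fin n × Fin m) (Fin n × Fin m) ℂ :=
  Matrix.of fun r c => if r.1 = c.1 then aC (((r.2 : ℕ) : ℤ) - ((c.2 : ℕ) : ℤ)) else 0

/-- `𝒜_1 = {a_{j−ℓ}}_{j,ℓ=1}^n`. -/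
def calA1 (n : ℕ) : Matrix (Fin n) (Fin n) ℂ :=
  Matrix.of fun p q => aC (((p : ℕ) : ℤ) - ((q : ℕ) : ℤ))

/-- `𝒜_2 = {a_{j−ℓ}}_{j,ℓ=1}^m`. -/
def calA2 (m : ℕ) : Matrix (Fin m) (Fin m) ℂ :=
  Matrix.of fun j l => aC (((j : ℕ) : ℤ) - ((l : ℕ) : ℤ))

/-- The Toeplitz-block Toeplitz matrix `T`, entry `t_{p−q}^{(j−ℓ)}`. -/
def TBT (m n : ℕ) (t : ℤ → ℤ → ℂ) : Matrix (Fin n × Fin m) (Fin n × Fin m) ℂ :=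
  Matrix.of fun r c =>
    t (((r.1 : ℕ) : ℤ) - ((c.1 : ℕ) : ℤ)) (((r.2 : ℕ) : ℤ) - ((c.2 : ℕ) : ℤ))

/-- `M_{11}`: block column, `p`-th block `(1/2)𝒯_0 + Σ_{s=1}^{p−1} 𝒯_s`. -/
def M11 (m n : ℕ) (t : ℤ → ℤ → ℂ) : Matrix (Fin n × Fin m) (Fin m) ℂ :=
  Matrix.of fun r l => (1 / 2 : ℂ) * t 0 (((r.2 : ℕ) : ℤ) - ((l : ℕ) : ℤ))
    + ∑ s ∈ Finset.range (r.1 : ℕ), t ((s : ℤ) + 1) (((r.2 : ℕ) : ℤ) - ((l : ℕ) : ℤ))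

/-- `M_{21} = [I_m I_m … I_m]`. -/
def M21 (m n : ℕ) : Matrix (Fin m) (Fin n × Fin m) ℂ :=
  Matrix.of fun j c => if j = c.2 then 1 else 0

/-- `M_{31} = M_{21}^*`. -/
def M31 (m n : ℕ) : Matrix (Fin n × Fin m) (Fin m) ℂ := (M21 m n)ᴴ

/-- `M_{41}`: block row, `q`-th block `(1/2)𝒯_0 + Σ_{s=1}^{q−1} 𝒯_{−s}`. -/
def M41 (m n : ℕ) (t : ℤ → ℤ → ℂ) : Matrix (Fin m) (Fin n × Fin m) ℂ :=
  Matrix.of fun j c => (1 / 2 : ℂ) * t 0 (((j : ℕ) : ℤ) - ((c.2 : ℕ) : ℤ))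
    + ∑ s ∈ Finset.range (c.1 : ℕ), t (-((s : ℤ) + 1)) (((j : ℕ) : ℤ) - ((c.2 : ℕ) : ℤ))

/-- `j`-th entry of the column `ℳ_{12}^{(r)}`. -/
def m12e (m : ℕ) (t : ℤ → ℤ → ℂ) (r : ℤ) (j : Fin m) : ℂ :=
  (1 / 2 : ℂ) * t r 0 + ∑ s ∈ Finset.range (j : ℕ), t r ((s : ℤ) + 1)

/-- `ℓ`-th entry of the row `ℳ_{42}^{(r)}`. -/
def m42e (m : ℕ) (t : ℤ → ℤ → ℂ) (r : ℤ) (l : Fin m) : ℂ :=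
  (1 / 2 : ℂ) * t r 0 + ∑ s ∈ Finset.range (l : ℕ), t r (-((s : ℤ) + 1))

/-- `M_{12} = {ℳ_{12}^{(p−q)}}`. -/
def M12 (m n : ℕ) (t : ℤ → ℤ → ℂ) : Matrix (Fin n × Fin m) (Fin n) ℂ :=
  Matrix.of fun r q => m12e m t (((r.1 : ℕ) : ℤ) - ((q : ℕ) : ℤ)) r.2

/-- `M_{22}`. -/
def M22 (m n : ℕ) : Matrix (Fin n) (Fin n × Fin m) ℂ :=
  Matrix.of fun p c => if p = c.1 then 1 else 0

/-- `M_{32} = M_{22}^*`. -/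
def M32 (m n : ℕ) : Matrix (Fin n × Fin m) (Fin n) ℂ := (M22 m n)ᴴ

/-- `M_{42} = {ℳ_{42}^{(p−q)}}`. -/
def M42 (m n : ℕ) (t : ℤ → ℤ → ℂ) : Matrix (Fin n) (Fin n × Fin m) ℂ :=
  Matrix.of fun p c => m42e m t (((p : ℕ) : ℤ) - ((c.1 : ℕ) : ℤ)) c.2

/-- `K`: the `1×mn` row, `q`-th block `(1/2)ℳ_{42}^{(0)} + Σ_{s=1}^{q−1} ℳ_{42}^{(−s)}`. -/
def Krow (m n : ℕ) (t : ℤ → ℤ → ℂ) : (Fin n × Fin m) → ℂ :=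
  fun c => (1 / 2 : ℂ) * m42e m t 0 c.2
    + ∑ s ∈ Finset.range (c.1 : ℕ), m42e m t (-((s : ℤ) + 1)) c.2

/-- `K_{11}`: `p`-th row `(1/2)ℳ_{42}^{(0)} + Σ_{s=1}^{p−1} ℳ_{42}^{(s)}`. -/
def K11 (m n : ℕ) (t : ℤ → ℤ → ℂ) : Matrix (Fin n) (Fin m) ℂ :=
  Matrix.of fun p l => (1 / 2 : ℂ) * m42e m t 0 l
    + ∑ s ∈ Finset.range (p : ℕ), m42e m t ((s : ℤ) + 1) l

/-- `K_{12}`: `q`-th column `(1/2)ℳ_{12}^{(0)} + Σ_{s=1}^{q−1} ℳ_{12}^{(−s)}`. -/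
def K12 (m n : ℕ) (t : ℤ → ℤ → ℂ) : Matrix (Fin m) (Fin n) ℂ :=
  Matrix.of fun j q => (1 / 2 : ℂ) * m12e m t 0 j
    + ∑ s ∈ Finset.range (q : ℕ), m12e m t (-((s : ℤ) + 1)) j

/-- `Π_1 = [M_{11} M_{31}]`. -/
def Pi1 (m n : ℕ) (t : ℤ → ℤ → ℂ) : Matrix (Fin n × Fin m) (Fin m ⊕ Fin m) ℂ :=
  fromCols (M11 m n t) (M31 m n)

/-- `Π_2 = [M_{12} M_{32}]`. -/
def Pi2 (m n : ℕ) (t : ℤ → ℤ → ℂ) : Matrix (Fin n × Fin m) (Fin n ⊕ Fin n) ℂ :=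
  fromCols (M12 m n t) (M32 m n)

/-- `Π̂_1 = col[M_{21}; M_{41}]`. -/
def PiHat1 (m n : ℕ) (t : ℤ → ℤ → ℂ) : Matrix (Fin m ⊕ Fin m) (Fin n × Fin m) ℂ :=
  fromRows (M21 m n) (M41 m n t)

/-- `Π̂_2 = col[M_{22}; M_{42}]`. -/
def PiHat2 (m n : ℕ) (t : ℤ → ℤ → ℂ) : Matrix (Fin n ⊕ Fin n) (Fin n × Fin m) ℂ :=
  fromRows (M22 m n) (M42 m n t)

/-- All-ones vector. -/
def onesV (k : Type*) : k → ℂ := fun _ => 1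

/-- `g_{12} = i·Π̂_1 T^{-1} Π_2 − i·[[𝟏_m 𝟏_n^*, 0],[K_{12}, 0]]`. -/
def g12M (m n : ℕ) (t : ℤ → ℤ → ℂ) : Matrix (Fin m ⊕ Fin m) (Fin n ⊕ Fin n) ℂ :=
  Complex.I • (PiHat1 m n t * (TBT m n t)⁻¹ * Pi2 m n t)
    - Complex.I • fromBlocks (vecMulVec (onesV (Fin m)) (onesV (Fin n))) 0 (K12 m n t) 0

/-- `g_{21} = i·Π̂_2 T^{-1} Π_1 − i·[[𝟏_n 𝟏_m^*, 0],[K_{11}, 0]]`. -/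
def g21M (m n : ℕ) (t : ℤ → ℤ → ℂ) : Matrix (Fin n ⊕ Fin n) (Fin m ⊕ Fin m) ℂ :=
  Complex.I • (PiHat2 m n t * (TBT m n t)⁻¹ * Pi1 m n t)
    - Complex.I • fromBlocks (vecMulVec (onesV (Fin n)) (onesV (Fin m))) 0 (K11 m n t) 0

/-- The `k×k` flip (anti-diagonal) matrix. -/
def flipU (k : ℕ) : Matrix (Fin k) (Fin k) ℂ :=
  Matrix.of fun p q => if (p : ℕ) + (q : ℕ) + 1 = k then 1 else 0

/-- `U_{2k}`, the `2k×2k` flip matrix on the sum type. -/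
def U2 (k : ℕ) : Matrix (Fin k ⊕ Fin k) (Fin k ⊕ Fin k) ℂ :=
  fromBlocks 0 (flipU k) (flipU k) 0

/-- `J_{2k} = diag{I_k, −I_k}`. -/
def J2 (k : ℕ) : Matrix (Fin k ⊕ Fin k) (Fin k ⊕ Fin k) ℂ :=
  fromBlocks 1 0 0 (-1)

/-- `U = U_{mn}`, the `mn×mn` flip matrix (global index `m·p + j`). -/
def UmnM (m n : ℕ) : Matrix (Fin n × Fin m) (Fin n × Fin m) ℂ :=
  Matrix.of fun r c =>
    if m * (r.1 : ℕ) + (r.2 : ℕ) + (m * (c.1 : ℕ) + (c.2 : ℕ)) + 1 = m * n then 1 else 0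

/-- `ψ(λ) = (λ + i/2)/(λ − i/2)`. -/
def psiM (l : ℂ) : ℂ := (l + Complex.I / 2) / (l - Complex.I / 2)

/-- `h(y_1, y_2)`, entry `y_1^{p−1} y_2^{j−1}`. -/
def hVec (m n : ℕ) (y1 y2 : ℂ) : (Fin n × Fin m) → ℂ :=
  fun r => y1 ^ (r.1 : ℕ) * y2 ^ (r.2 : ℕ)

/-- `ω(λ,μ) = 𝟏^*(A_1^*−μ_1)^{-1}(A_2^*−μ_2)^{-1}T^{-1}(A_2−λ_2)^{-1}(A_1−λ_1)^{-1}𝟏`. -/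
def omegaF (m n : ℕ) (t : ℤ → ℤ → ℂ) (l1 l2 u1 u2 : ℂ) : ℂ :=
  star (onesV (Fin n × Fin m)) ⬝ᵥ
    ((((A1 m n)ᴴ - u1 • 1)⁻¹ * ((A2 m n)ᴴ - u2 • 1)⁻¹ * (TBT m n t)⁻¹ *
      (A2 m n - l2 • 1)⁻¹ * (A1 m n - l1 • 1)⁻¹) *ᵥ onesV (Fin n × Fin m))

/-- `ρ(y,z) = h(conj z_1, conj z_2)^* T^{-1} h(y_1,y_2)`. -/
def rhoF (m n : ℕ) (t : ℤ → ℤ → ℂ) (y1 y2 z1 z2 : ℂ) : ℂ :=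
  star (hVec m n ((starRingEnd ℂ) z1) ((starRingEnd ℂ) z2)) ⬝ᵥ
    ((TBT m n t)⁻¹ *ᵥ hVec m n y1 y2)

/-- `Γ_1 = T^{-1}Π_1`. -/
def Gam1 (m n : ℕ) (t : ℤ → ℤ → ℂ) : Matrix (Fin n × Fin m) (Fin m ⊕ Fin m) ℂ :=
  (TBT m n t)⁻¹ * Pi1 m n t

/-- `Γ_2 = T^{-1}Π_2`. -/
def Gam2 (m n : ℕ) (t : ℤ → ℤ → ℂ) : Matrix (Fin n × Fin m) (Fin n ⊕ Fin n) ℂ :=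
  (TBT m n t)⁻¹ * Pi2 m n t

/-- `Γ̂_1 = Π̂_1 T^{-1}`. -/
def GamHat1 (m n : ℕ) (t : ℤ → ℤ → ℂ) : Matrix (Fin m ⊕ Fin m) (Fin n × Fin m) ℂ :=
  PiHat1 m n t * (TBT m n t)⁻¹

/-- `Γ̂_2 = Π̂_2 T^{-1}`. -/
def GamHat2 (m n : ℕ) (t : ℤ → ℤ → ℂ) : Matrix (Fin n ⊕ Fin n) (Fin n × Fin m) ℂ :=
  PiHat2 m n t * (TBT m n t)⁻¹

/-- `Γ = [Γ_1 Γ_2]`. -/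
def GammaFull (m n : ℕ) (t : ℤ → ℤ → ℂ) :
    Matrix (Fin n × Fin m) ((Fin m ⊕ Fin m) ⊕ (Fin n ⊕ Fin n)) ℂ :=
  fromCols (Gam1 m n t) (Gam2 m n t)

/-- `Γ̂ = col[Γ̂_1; Γ̂_2]`. -/
def GammaHatFull (m n : ℕ) (t : ℤ → ℤ → ℂ) :
    Matrix ((Fin m ⊕ Fin m) ⊕ (Fin n ⊕ Fin n)) (Fin n × Fin m) ℂ :=
  fromRows (GamHat1 m n t) (GamHat2 m n t)

/-- The row vector `u(μ)`. -/
def uRow (m n : ℕ) (t : ℤ → ℤ → ℂ) (u1 u2 : ℂ) :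
    ((Fin m ⊕ Fin m) ⊕ (Fin n ⊕ Fin n)) → ℂ :=
  star (onesV (Fin n × Fin m)) ᵥ*
      (((A1 m n)ᴴ - u1 • 1)⁻¹ * ((A2 m n)ᴴ - u2 • 1)⁻¹ * GammaFull m n t)
    - Complex.I • Sum.elim
        (Sum.elim (star (onesV (Fin m)) ᵥ* ((calA2 m)ᴴ - u2 • 1)⁻¹) (0 : Fin m → ℂ))
        (Sum.elim (star (onesV (Fin n)) ᵥ* ((calA1 n)ᴴ - u1 • 1)⁻¹) (0 : Fin n → ℂ))

/-- The column vector `û(λ)`. -/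
def uHatCol (m n : ℕ) (t : ℤ → ℤ → ℂ) (l1 l2 : ℂ) :
    ((Fin m ⊕ Fin m) ⊕ (Fin n ⊕ Fin n)) → ℂ :=
  (GammaHatFull m n t * (A2 m n - l2 • 1)⁻¹ * (A1 m n - l1 • 1)⁻¹) *ᵥ onesV (Fin n × Fin m)
    + Complex.I • Sum.elim
        (Sum.elim (0 : Fin m → ℂ) ((calA2 m - l2 • 1)⁻¹ *ᵥ onesV (Fin m)))
        (Sum.elim (0 : Fin n → ℂ) ((calA1 n - l1 • 1)⁻¹ *ᵥ onesV (Fin n)))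

/-- `P_1 = diag{I_{2m}, 0}`. -/
def P1M (m n : ℕ) :
    Matrix ((Fin m ⊕ Fin m) ⊕ (Fin n ⊕ Fin n)) ((Fin m ⊕ Fin m) ⊕ (Fin n ⊕ Fin n)) ℂ :=
  fromBlocks 1 0 0 0

/-- `P_2 = I − P_1`. -/
def P2M (m n : ℕ) :
    Matrix ((Fin m ⊕ Fin m) ⊕ (Fin n ⊕ Fin n)) ((Fin m ⊕ Fin m) ⊕ (Fin n ⊕ Fin n)) ℂ :=
  1 - P1M m n

/-- `G(λ)`, built from `g_{12}` and `g_{21}`. -/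
def GMat (m n : ℕ) (g12 : Matrix (Fin m ⊕ Fin m) (Fin n ⊕ Fin n) ℂ)
    (g21 : Matrix (Fin n ⊕ Fin n) (Fin m ⊕ Fin m) ℂ) (l1 l2 : ℂ) :
    Matrix ((Fin m ⊕ Fin m) ⊕ (Fin n ⊕ Fin n)) ((Fin m ⊕ Fin m) ⊕ (Fin n ⊕ Fin n)) ℂ :=
  fromBlocks (fromBlocks (calA2 m - l2 • 1) 0 0 (calA2 m - l2 • 1)) g12
             g21 (fromBlocks (calA1 n - l1 • 1) 0 0 (calA1 n - l1 • 1))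

/-- `G` as a matrix over the polynomial ring `ℂ[λ_1, λ_2]` (variables `X 0 = λ_1`, `X 1 = λ_2`). -/
def GPoly (m n : ℕ) (g12 : Matrix (Fin m ⊕ Fin m) (Fin n ⊕ Fin n) ℂ)
    (g21 : Matrix (Fin n ⊕ Fin n) (Fin m ⊕ Fin m) ℂ) :
    Matrix ((Fin m ⊕ Fin m) ⊕ (Fin n ⊕ Fin n)) ((Fin m ⊕ Fin m) ⊕ (Fin n ⊕ Fin n))
      (MvPolynomial (Fin 2) ℂ) :=
  fromBlocks
    (fromBlocks ((calA2 m).map MvPolynomial.C - (MvPolynomial.X 1 : MvPolynomial (Fin 2) ℂ) • 1) 0 0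
      ((calA2 m).map MvPolynomial.C - (MvPolynomial.X 1 : MvPolynomial (Fin 2) ℂ) • 1))
    (g12.map MvPolynomial.C)
    (g21.map MvPolynomial.C)
    (fromBlocks ((calA1 n).map MvPolynomial.C - (MvPolynomial.X 0 : MvPolynomial (Fin 2) ℂ) • 1) 0 0
      ((calA1 n).map MvPolynomial.C - (MvPolynomial.X 0 : MvPolynomial (Fin 2) ℂ) • 1))

/-- The vector `col[0_m; 𝟏_m; 0_n; 𝟏_n]`. -/
def eVec (m n : ℕ) : ((Fin m ⊕ Fin m) ⊕ (Fin n ⊕ Fin n)) → ℂ :=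
  Sum.elim (Sum.elim (0 : Fin m → ℂ) (onesV (Fin m))) (Sum.elim (0 : Fin n → ℂ) (onesV (Fin n)))

/-- `diag{J_{2m}U_{2m}, J_{2n}U_{2n}}`. -/
def DJU (m n : ℕ) :
    Matrix ((Fin m ⊕ Fin m) ⊕ (Fin n ⊕ Fin n)) ((Fin m ⊕ Fin m) ⊕ (Fin n ⊕ Fin n)) ℂ :=
  fromBlocks (J2 m * U2 m) 0 0 (J2 n * U2 n)

/-- The block column `col[I_m; I_m; …; I_m]`. -/
def EcolId (m n : ℕ) : Matrix (Fin n × Fin m) (Fin m) ℂ :=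
  Matrix.of fun r l => if r.2 = l then 1 else 0

/-
Let `ψ(λ) = (λ + i/2)/(λ - i/2)` and `φ = 1/ψ`. For the lower triangular Toeplitz matrix
`𝒜_k = {a_{j-ℓ}}` the column `g_k(λ) = (𝒜_k - λ)⁻¹𝟏` is explicit, `g_k(λ)_j = -ψ(λ)^j/(λ - i/2)`
(a geometric sum), and reversing it gives `g_k(-λ) = -φ(λ)^k · (g_k(λ) ∘ rev)`.
Since `𝒜_kᴴ = -𝒜_kᵀ`, the row `𝟏ᵀ(𝒜_kᴴ - μ)⁻¹` is `-g_k(-μ)ᵀ`. As `A_1 = 𝒜_1 ⊗ I` and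
`A_2 = I ⊗ 𝒜_2`, the row `𝟏ᵀ(A_1ᴴ - μ_1)⁻¹(A_2ᴴ - μ_2)⁻¹` is therefore `φ(μ_1)^n φ(μ_2)^m (U v)ᵀ`,
where `v = (A_2 - μ_2)⁻¹(A_1 - μ_1)⁻¹𝟏 = g_n(μ_1) ⊗ g_m(μ_2)` and `U` is the flip.
`T` is persymmetric, `U T = Tᵀ U`, and the generators satisfy `U Π_p = Π̂_pᵀ J U + Tᵀ C_p`
for explicit `C_p`, so `U Γ = Γ̂ᵀ diag{J U} + C`. This turns `u(μ)` into
`φ(μ_1)^n φ(μ_2)^m (Γ̂ v)ᵀ diag{J U}` plus `vᵀ C` and the scalar part of `u`; as `vᵀ C` only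
involves the sums `Σ_j g_k(λ)_j = i(ψ(λ)^k - 1)`, these combine into the scalar part of `û(μ)`.
-/

open Finset Complex Kronecker

lemma calA1_eq_calA2 : calA1 = calA2 := rfl

def phiM (l : ℂ) : ℂ := (l - I / 2) / (l + I / 2)

def resolventCoeff (l : ℂ) (i : ℕ) : ℂ := -(psiM l ^ i) / (l - I / 2)

def resolventVec (k : ℕ) (l : ℂ) : Fin k → ℂ := fun i => resolventCoeff l i

lemma star_aC (r : ℤ) : star (aC r) = -aC r := by
  rw [aC]; split_ifs <;> simp [neg_div]

lemma aC_of_pos {r : ℤ} (h : 0 < r) : aC r = I := by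
  rw [aC, if_neg (by omega), if_neg (by omega)]

lemma aC_of_neg {r : ℤ} (h : r < 0) : aC r = 0 := if_pos h

lemma psiM_sub_one {l : ℂ} (hl : l ≠ I / 2) : psiM l - 1 = I / (l - I / 2) := by
  rw [psiM, div_sub_one (sub_ne_zero.mpr hl)]; ring_nf

lemma psiM_neg {l : ℂ} (hl' : l ≠ -(I / 2)) : psiM (-l) = phiM l := by
  have : -l - I / 2 ≠ 0 := fun h => hl' (by linear_combination -h)
  rw [psiM, phiM, div_eq_div_iff this (fun h => hl' (by linear_combination h))]
  ring

lemma phiM_mul_psiM {l : ℂ} (hl : l ≠ I / 2) (hl' : l ≠ -(I / 2)) : phiM l * psiM l = 1 := by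
  have h₁ : l - I / 2 ≠ 0 := sub_ne_zero.mpr hl
  have h₂ : l + I / 2 ≠ 0 := fun h => hl' (by linear_combination h)
  rw [phiM, psiM, div_mul_div_comm, mul_comm (l - I / 2), div_self (mul_ne_zero h₂ h₁)]

lemma I_mul_sum_resolventCoeff {l : ℂ} (hl : l ≠ I / 2) (j : ℕ) :
    I * ∑ i ∈ range j, resolventCoeff l i = 1 - psiM l ^ j := by
  induction j with
  | zero => simp
  | succ j ih =>
    rw [sum_range_succ, mul_add, ih, pow_succ, resolventCoeff]
    linear_combination psiM l ^ j * psiM_sub_one hl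

lemma sum_range_aC_mul (v : ℕ → ℂ) {j k : ℕ} (hj : j < k) :
    ∑ i ∈ range k, aC (j - i) * v i = I * ∑ i ∈ range j, v i + I / 2 * v j := by
  obtain ⟨r, rfl⟩ : ∃ r, k = j + 1 + r := ⟨k - (j + 1), by omega⟩
  have htail : ∑ i ∈ range r, aC (j - ((j + 1 + i : ℕ) : ℤ)) * v (j + 1 + i) = 0 :=
    sum_eq_zero fun i _ => by rw [aC_of_neg (by omega), zero_mul]
  have hhead : ∀ i ∈ range j, aC (j - i) * v i = I * v i := fun i hi => by
    rw [aC_of_pos (by have := mem_range.mp hi; omega)]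
  rw [sum_range_add, sum_range_succ, htail, sum_congr rfl hhead, sub_self, mul_sum, add_zero]
  rfl

lemma calA2_mulVec_apply {k : ℕ} (v : ℕ → ℂ) (j : Fin k) :
    (calA2 k *ᵥ fun i => v i) j = I * ∑ i ∈ range j, v i + I / 2 * v j :=
  (Fin.sum_univ_eq_sum_range (fun i => aC (j - i) * v i) k).trans (sum_range_aC_mul v j.isLt)

lemma calA2_sub_smul_mulVec_resolventVec (k : ℕ) {l : ℂ} (hl : l ≠ I / 2) :
    (calA2 k - l • 1) *ᵥ resolventVec k l = onesV (Fin k) := by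
  funext j
  unfold resolventVec
  rw [sub_mulVec, smul_mulVec, one_mulVec, Pi.sub_apply, calA2_mulVec_apply,
    I_mul_sum_resolventCoeff hl, Pi.smul_apply, smul_eq_mul, resolventCoeff]
  have h : (I / 2 - l) * (-(psiM l ^ (j : ℕ)) / (l - I / 2)) = psiM l ^ (j : ℕ) := by
    rw [mul_div_assoc', div_eq_iff (sub_ne_zero.mpr hl)]; ring
  rw [onesV]
  linear_combination h

lemma isUnit_det_calA2_sub_smul (k : ℕ) {l : ℂ} (hl : l ≠ I / 2) :
    IsUnit (calA2 k - l • 1).det := by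
  have htri : (calA2 k - l • 1).IsLowerTriangular := fun i j hij => by
    have hij : i < j := hij
    simp [calA2, aC_of_neg (show (i : ℤ) - j < 0 by omega), one_apply_ne hij.ne]
  have hdiag : ∀ i, (calA2 k - l • 1) i i = I / 2 - l := fun i => by simp [calA2, aC]
  rw [det_of_isLowerTriangular _ htri, prod_congr rfl fun i _ => hdiag i, prod_const]
  exact (isUnit_iff_ne_zero.mpr fun h => hl (by linear_combination -h)).pow _

lemma inv_mulVec_eq_of_mulVec_eq {ι R : Type*} [Fintype ι] [DecidableEq ι] [CommRing R]
    {A : Matrix ι ι R} (hA : IsUnit A.det) {v w : ι → R} (h : A *ᵥ w = v) : A⁻¹ *ᵥ v = w := by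
  rw [← h, mulVec_mulVec, nonsing_inv_mul _ hA, one_mulVec]

lemma vecMul_inv_eq_of_vecMul_eq {ι R : Type*} [Fintype ι] [DecidableEq ι] [CommRing R]
    {A : Matrix ι ι R} (hA : IsUnit A.det) {v w : ι → R} (h : w ᵥ* A = v) : v ᵥ* A⁻¹ = w := by
  rw [← h, vecMul_vecMul, mul_nonsing_inv _ hA, vecMul_one]

lemma inv_calA2_sub_smul_mulVec_ones (k : ℕ) {l : ℂ} (hl : l ≠ I / 2) :
    (calA2 k - l • 1)⁻¹ *ᵥ onesV (Fin k) = resolventVec k l :=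
  inv_mulVec_eq_of_mulVec_eq (isUnit_det_calA2_sub_smul k hl)
    (calA2_sub_smul_mulVec_resolventVec k hl)

lemma conjTranspose_calA2_sub_smul (k : ℕ) (u : ℂ) :
    (calA2 k)ᴴ - u • 1 = -(calA2 k - (-u) • 1)ᵀ := by
  have h : (calA2 k)ᴴ = -(calA2 k)ᵀ := by ext; simp [calA2, star_aC]
  rw [h, transpose_sub, transpose_smul, transpose_one, neg_smul]
  abel

lemma ones_vecMul_inv_conjTranspose_calA2_sub_smul (k : ℕ) {u : ℂ} (hu : u ≠ -(I / 2)) :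
    onesV (Fin k) ᵥ* ((calA2 k)ᴴ - u • 1)⁻¹ = -resolventVec k (-u) := by
  have hu' : -u ≠ I / 2 := fun h => hu (by linear_combination -h)
  rw [conjTranspose_calA2_sub_smul]
  refine vecMul_inv_eq_of_vecMul_eq ?_ ?_
  · rw [det_neg, det_transpose]
    exact (isUnit_neg_one.pow _).mul (isUnit_det_calA2_sub_smul k hu')
  · rw [vecMul_neg, neg_vecMul, neg_neg, vecMul_transpose,
      calA2_sub_smul_mulVec_resolventVec k hu']

lemma resolventVec_neg (k : ℕ) {l : ℂ} (hl : l ≠ I / 2) (hl' : l ≠ -(I / 2)) :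
    resolventVec k (-l) = -phiM l ^ k • (resolventVec k l ∘ Fin.rev) := by
  funext i
  obtain ⟨r, hk⟩ : ∃ r, k = i + 1 + r := ⟨k - (i + 1), by omega⟩
  have hrev : (i.rev : ℕ) = r := by rw [Fin.val_rev]; omega
  have key : phiM l ^ (i + 1 + r) * psiM l ^ r = phiM l ^ (i : ℕ) * phiM l := by
    rw [pow_add, mul_assoc, ← mul_pow, phiM_mul_psiM hl hl', one_pow, mul_one, pow_succ]
  simp only [resolventVec, resolventCoeff, Function.comp, Pi.smul_apply, smul_eq_mul, hrev,
    psiM_neg hl', hk]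
  have h₁ : l - I / 2 ≠ 0 := sub_ne_zero.mpr hl
  have hc : phiM l / (l - I / 2) = 1 / (l + I / 2) := by
    rw [phiM, div_right_comm, div_self h₁]
  rw [show -phiM l ^ (i + 1 + r) * (-psiM l ^ r / (l - I / 2))
      = phiM l ^ (i : ℕ) * (phiM l / (l - I / 2)) by linear_combination key / (l - I / 2),
    hc, show -l - I / 2 = -(l + I / 2) by ring, div_neg, neg_div, neg_neg, mul_one_div]

lemma sum_resolventVec (k : ℕ) {l : ℂ} (hl : l ≠ I / 2) :
    ∑ i, resolventVec k l i = I * (psiM l ^ k - 1) := by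
  have h := I_mul_sum_resolventCoeff hl k
  rw [← Fin.sum_univ_eq_sum_range] at h
  change I * ∑ i, resolventVec k l i = _ at h
  linear_combination -I * h + (∑ i, resolventVec k l i) * I_sq

def resolventVec₂ (m n : ℕ) (l₁ l₂ : ℂ) : Fin n × Fin m → ℂ :=
  fun r => resolventVec n l₁ r.1 * resolventVec m l₂ r.2

lemma A1_eq_kronecker (m n : ℕ) : A1 m n = calA2 n ⊗ₖ 1 := by
  ext ⟨p, j⟩ ⟨q, l⟩
  by_cases h : j = l <;> simp [A1, calA2, one_apply, h]

lemma A2_eq_kronecker (m n : ℕ) : A2 m n = 1 ⊗ₖ calA2 m := by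
  ext ⟨p, j⟩ ⟨q, l⟩
  by_cases h : p = q <;> simp [A2, calA2, one_apply, h]

section Kronecker

variable {ι κ ι' κ' R : Type*} [CommRing R]

lemma kronecker_one_sub_smul [DecidableEq ι] [DecidableEq κ] (X : Matrix ι ι R) (c : R) :
    X ⊗ₖ (1 : Matrix κ κ R) - c • 1 = (X - c • 1) ⊗ₖ 1 := by
  ext ⟨a, b⟩ ⟨a', b'⟩
  by_cases ha : a = a' <;> by_cases hb : b = b' <;> simp [one_apply, ha, hb]

lemma one_kronecker_sub_smul [DecidableEq ι] [DecidableEq κ] (Y : Matrix κ κ R) (c : R) :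
    (1 : Matrix ι ι R) ⊗ₖ Y - c • 1 = 1 ⊗ₖ (Y - c • 1) := by
  ext ⟨a, b⟩ ⟨a', b'⟩
  by_cases ha : a = a' <;> by_cases hb : b = b' <;> simp [one_apply, ha, hb]

lemma kronecker_mulVec_mul [Fintype ι] [Fintype κ] (A : Matrix ι' ι R) (B : Matrix κ' κ R)
    (v : ι → R) (w : κ → R) :
    (A ⊗ₖ B) *ᵥ (fun r => v r.1 * w r.2) = fun r => (A *ᵥ v) r.1 * (B *ᵥ w) r.2 := by
  funext r
  simp only [mulVec, dotProduct, kroneckerMap_apply, Fintype.sum_prod_type, sum_mul_sum]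
  exact sum_congr rfl fun _ _ => sum_congr rfl fun _ _ => by ring

lemma vecMul_kronecker_mul [Fintype ι] [Fintype κ] (A : Matrix ι ι' R) (B : Matrix κ κ' R)
    (v : ι → R) (w : κ → R) :
    (fun r => v r.1 * w r.2) ᵥ* (A ⊗ₖ B) = fun r => (v ᵥ* A) r.1 * (w ᵥ* B) r.2 := by
  funext r
  simp only [vecMul, dotProduct, kroneckerMap_apply, Fintype.sum_prod_type, sum_mul_sum]
  exact sum_congr rfl fun _ _ => sum_congr rfl fun _ _ => by ring

end Kronecker

lemma onesV_prod (ι κ : Type*) : onesV (ι × κ) = fun r => onesV ι r.1 * onesV κ r.2 := by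
  funext; simp [onesV]

lemma star_onesV (ι : Type*) : star (onesV ι) = onesV ι := by
  funext; simp [onesV]

lemma inv_A2_sub_smul_mul_inv_A1_sub_smul_mulVec_ones (m n : ℕ) {l₁ l₂ : ℂ}
    (hl₁ : l₁ ≠ I / 2) (hl₂ : l₂ ≠ I / 2) :
    ((A2 m n - l₂ • 1)⁻¹ * (A1 m n - l₁ • 1)⁻¹) *ᵥ onesV (Fin n × Fin m)
      = resolventVec₂ m n l₁ l₂ := by
  rw [A1_eq_kronecker, A2_eq_kronecker, kronecker_one_sub_smul, one_kronecker_sub_smul,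
    inv_kronecker, inv_kronecker, inv_one, inv_one, ← mul_kronecker_mul, one_mul, mul_one,
    onesV_prod, kronecker_mulVec_mul, inv_calA2_sub_smul_mulVec_ones n hl₁,
    inv_calA2_sub_smul_mulVec_ones m hl₂]
  rfl

lemma ones_vecMul_inv_conjTranspose_A1_sub_smul_mul (m n : ℕ) {u₁ u₂ : ℂ}
    (hu₁ : u₁ ≠ -(I / 2)) (hu₂ : u₂ ≠ -(I / 2)) :
    onesV (Fin n × Fin m) ᵥ* (((A1 m n)ᴴ - u₁ • 1)⁻¹ * ((A2 m n)ᴴ - u₂ • 1)⁻¹)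
      = resolventVec₂ m n (-u₁) (-u₂) := by
  rw [A1_eq_kronecker, A2_eq_kronecker, conjTranspose_kronecker, conjTranspose_kronecker,
    conjTranspose_one, conjTranspose_one, kronecker_one_sub_smul, one_kronecker_sub_smul,
    inv_kronecker, inv_kronecker, inv_one, inv_one, ← mul_kronecker_mul, one_mul, mul_one,
    onesV_prod, vecMul_kronecker_mul, ones_vecMul_inv_conjTranspose_calA2_sub_smul n hu₁,
    ones_vecMul_inv_conjTranspose_calA2_sub_smul m hu₂]
  funext r
  simp [resolventVec₂]

def revProd (m n : ℕ) : Equiv.Perm (Fin n × Fin m) := Equiv.prodCongr Fin.revPerm Fin.revPerm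

@[simp] lemma revProd_apply (m n : ℕ) (r : Fin n × Fin m) : revProd m n r = (r.1.rev, r.2.rev) :=
  rfl

@[simp] lemma revProd_symm (m n : ℕ) : (revProd m n).symm = revProd m n := rfl

lemma flipU_eq_toMatrix (k : ℕ) :
    flipU k = (Fin.revPerm : Equiv.Perm (Fin k)).toPEquiv.toMatrix := by
  ext p q
  rw [flipU, of_apply, PEquiv.toMatrix_toPEquiv_apply, Pi.single_apply]
  refine if_congr ?_ rfl rfl
  rw [Fin.revPerm_apply, Fin.ext_iff, Fin.val_rev]
  omega

lemma mul_add_mul_add_one_eq_mul_iff {m n p q j l : ℕ} (hp : p < n) (hq : q < n) (hj : j < m)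
    (hl : l < m) : m * p + j + (m * q + l) + 1 = m * n ↔ p + q + 1 = n ∧ j + l + 1 = m := by
  constructor
  · intro h
    have hpq : p + q + 1 = n := by
      rcases lt_trichotomy (p + q + 1) n with hlt | heq | hgt
      · nlinarith
      · exact heq
      · nlinarith
    subst hpq
    refine ⟨rfl, by nlinarith⟩
  · rintro ⟨rfl, rfl⟩
    ring

lemma UmnM_eq_toMatrix (m n : ℕ) : UmnM m n = (revProd m n).toPEquiv.toMatrix := by
  ext ⟨p, j⟩ ⟨q, l⟩
  rw [UmnM, of_apply, PEquiv.toMatrix_toPEquiv_apply, Pi.single_apply]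
  refine if_congr ?_ rfl rfl
  rw [revProd_apply, Prod.ext_iff, Fin.ext_iff, Fin.ext_iff, Fin.val_rev, Fin.val_rev]
  have := mul_add_mul_add_one_eq_mul_iff p.isLt q.isLt j.isLt l.isLt
  simp only at this ⊢
  omega

lemma mul_flipU {ι : Type*} (k : ℕ) (M : Matrix ι (Fin k) ℂ) :
    M * flipU k = M.submatrix id Fin.rev := by
  rw [flipU_eq_toMatrix, PEquiv.mul_toMatrix_toPEquiv, Fin.revPerm_symm]
  rfl

lemma vecMul_flipU (k : ℕ) (v : Fin k → ℂ) : v ᵥ* flipU k = v ∘ Fin.rev := by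
  rw [flipU_eq_toMatrix, PEquiv.vecMul_toMatrix_toPEquiv, Fin.revPerm_symm]
  rfl

lemma UmnM_mul {ι : Type*} (m n : ℕ) (M : Matrix (Fin n × Fin m) ι ℂ) :
    UmnM m n * M = M.submatrix (revProd m n) id := by
  rw [UmnM_eq_toMatrix, PEquiv.toMatrix_toPEquiv_mul]

lemma mul_UmnM {ι : Type*} (m n : ℕ) (M : Matrix ι (Fin n × Fin m) ℂ) :
    M * UmnM m n = M.submatrix id (revProd m n) := by
  rw [UmnM_eq_toMatrix, PEquiv.mul_toMatrix_toPEquiv, revProd_symm]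

lemma vecMul_UmnM (m n : ℕ) (v : Fin n × Fin m → ℂ) : v ᵥ* UmnM m n = v ∘ revProd m n := by
  rw [UmnM_eq_toMatrix, PEquiv.vecMul_toMatrix_toPEquiv, revProd_symm]

lemma resolventVec₂_neg (m n : ℕ) {l₁ l₂ : ℂ} (hl₁ : l₁ ≠ I / 2) (hl₁' : l₁ ≠ -(I / 2))
    (hl₂ : l₂ ≠ I / 2) (hl₂' : l₂ ≠ -(I / 2)) :
    resolventVec₂ m n (-l₁) (-l₂)
      = (phiM l₁ ^ n * phiM l₂ ^ m) • (resolventVec₂ m n l₁ l₂ ᵥ* UmnM m n) := by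
  rw [vecMul_UmnM]
  funext r
  simp only [resolventVec₂, resolventVec_neg n hl₁ hl₁', resolventVec_neg m hl₂ hl₂',
    Pi.smul_apply, Function.comp, smul_eq_mul, revProd_apply]
  ring

lemma UmnM_mul_TBT (m n : ℕ) (t : ℤ → ℤ → ℂ) :
    UmnM m n * TBT m n t = (TBT m n t)ᵀ * UmnM m n := by
  rw [UmnM_mul, mul_UmnM]
  ext ⟨p, j⟩ ⟨q, l⟩
  simp only [submatrix_apply, transpose_apply, TBT, of_apply, revProd_apply, id, Fin.val_rev]
  congr 1 <;> omega

lemma mul_inv_eq_inv_mul_of_mul_eq {ι R : Type*} [Fintype ι] [DecidableEq ι] [CommRing R]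
    {U A B : Matrix ι ι R} (hA : IsUnit A.det) (hB : IsUnit B.det) (h : U * A = B * U) :
    U * A⁻¹ = B⁻¹ * U := by
  calc U * A⁻¹ = B⁻¹ * (B * U) * A⁻¹ := by rw [nonsing_inv_mul_cancel_left _ _ hB]
    _ = B⁻¹ * U := by rw [← h, Matrix.mul_assoc, mul_nonsing_inv_cancel_right _ _ hA]

lemma UmnM_mul_inv_TBT (m n : ℕ) (t : ℤ → ℤ → ℂ) (hT : IsUnit (TBT m n t)) :
    UmnM m n * (TBT m n t)⁻¹ = (TBT m n t)⁻¹ᵀ * UmnM m n := by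
  have hdet := (isUnit_iff_isUnit_det _).mp hT
  rw [transpose_nonsing_inv]
  exact mul_inv_eq_inv_mul_of_mul_eq hdet (isUnit_det_transpose _ hdet) (UmnM_mul_TBT m n t)

lemma sum_range_sub_eq (f : ℤ → ℂ) {p N : ℕ} (hp : p < N) :
    ∑ q ∈ range N, f (q - p)
      = f 0 + ∑ s ∈ range p, f (-(s + 1)) + ∑ s ∈ range (N - (p + 1)), f (s + 1) := by
  obtain ⟨r, rfl⟩ : ∃ r, N = p + 1 + r := ⟨N - (p + 1), by omega⟩
  rw [sum_range_add, sum_range_succ, ← sum_range_reflect, sub_self,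
    show p + 1 + r - (p + 1) = r by omega]
  have hhead : ∀ s ∈ range p, f (((p - 1 - s : ℕ) : ℤ) - p) = f (-(s + 1)) := fun s hs => by
    simp only [mem_range] at hs
    congr 1; omega
  have htail : ∀ s ∈ range r, f (((p + 1 + s : ℕ) : ℤ) - p) = f (s + 1) := fun s _ => by
    congr 1; push_cast; ring
  rw [sum_congr rfl hhead, sum_congr rfl htail]
  ring

lemma UmnM_mul_M31 (m n : ℕ) : UmnM m n * M31 m n = (M21 m n)ᵀ * flipU m := by
  rw [UmnM_mul, mul_flipU]
  ext ⟨p, j⟩ l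
  simp [M31, M21, Fin.rev_eq_iff]

lemma UmnM_mul_M32 (m n : ℕ) : UmnM m n * M32 m n = (M22 m n)ᵀ * flipU n := by
  rw [UmnM_mul, mul_flipU]
  ext ⟨p, j⟩ q
  simp [M32, M22, Fin.rev_eq_iff]

lemma UmnM_mul_M11 (m n : ℕ) (t : ℤ → ℤ → ℂ) :
    UmnM m n * M11 m n t = -((M41 m n t)ᵀ * flipU m) + (TBT m n t)ᵀ * EcolId m n * flipU m := by
  rw [UmnM_mul, mul_flipU, mul_flipU]
  ext ⟨p, j⟩ l
  have hsum : ((TBT m n t)ᵀ * EcolId m n) (p, j) l.rev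
      = ∑ q ∈ range n, t (q - p) ((l.rev : ℕ) - j) := by
    simp only [mul_apply, Fintype.sum_prod_type, EcolId, TBT, of_apply, transpose_apply, mul_ite,
      mul_one, mul_zero, sum_ite_eq', mem_univ, if_true]
    exact Fin.sum_univ_eq_sum_range (fun q => t (q - p) ((l.rev : ℕ) - j)) n
  have harg : ((j.rev : ℕ) : ℤ) - l = (l.rev : ℕ) - j := by simp only [Fin.val_rev]; omega
  simp only [submatrix_apply, revProd_apply, id, M11, M41, of_apply, Matrix.add_apply,
    Matrix.neg_apply, transpose_apply, hsum]
  rw [harg, sum_range_sub_eq (fun z => t z _) p.isLt]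
  simp only [Fin.val_rev]
  ring

lemma UmnM_mul_M12 (m n : ℕ) (t : ℤ → ℤ → ℂ) :
    UmnM m n * M12 m n t = -((M42 m n t)ᵀ * flipU n) + (TBT m n t)ᵀ * M32 m n * flipU n := by
  rw [UmnM_mul, mul_flipU, mul_flipU]
  ext ⟨p, j⟩ q
  have hsum : ((TBT m n t)ᵀ * M32 m n) (p, j) q.rev
      = ∑ l ∈ range m, t ((q.rev : ℕ) - p) (l - j) := by
    simp only [TBT, M32, M22, mul_apply, transpose_apply, of_apply, conjTranspose_apply,
      RCLike.star_def, MonoidWithZeroHom.map_ite_one_zero, mul_ite, mul_one, mul_zero,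
      Fintype.sum_prod_type, sum_ite_irrel, sum_const_zero, sum_ite_eq, mem_univ, if_true]
    exact Fin.sum_univ_eq_sum_range (fun l => t ((q.rev : ℕ) - p) (l - j)) m
  have harg : ((p.rev : ℕ) : ℤ) - q = (q.rev : ℕ) - p := by simp only [Fin.val_rev]; omega
  simp only [submatrix_apply, revProd_apply, id, M12, M42, m12e, m42e, of_apply,
    Matrix.add_apply, Matrix.neg_apply, transpose_apply, hsum]
  rw [harg, sum_range_sub_eq (fun z => t _ z) j.isLt]
  simp only [Fin.val_rev]
  ring

lemma fromCols_add_fromCols {ι κ₁ κ₂ R : Type*} [Add R] (A C : Matrix ι κ₁ R)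
    (B D : Matrix ι κ₂ R) : fromCols A B + fromCols C D = fromCols (A + C) (B + D) := by
  ext i (j | j) <;> rfl

lemma J2_mul_U2 (k : ℕ) : J2 k * U2 k = fromBlocks 0 (flipU k) (-flipU k) 0 := by
  rw [J2, U2, fromBlocks_multiply]
  simp

lemma UmnM_mul_Pi1 (m n : ℕ) (t : ℤ → ℤ → ℂ) :
    UmnM m n * Pi1 m n t
      = (PiHat1 m n t)ᵀ * (J2 m * U2 m) + (TBT m n t)ᵀ * fromCols (EcolId m n * flipU m) 0 := by
  rw [Pi1, mul_fromCols, UmnM_mul_M11, UmnM_mul_M31, PiHat1, transpose_fromRows, J2_mul_U2,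
    fromCols_mul_fromBlocks, mul_fromCols, fromCols_add_fromCols]
  simp only [Matrix.mul_zero, Matrix.mul_neg, add_zero, zero_add, Matrix.mul_assoc]

lemma UmnM_mul_Pi2 (m n : ℕ) (t : ℤ → ℤ → ℂ) :
    UmnM m n * Pi2 m n t
      = (PiHat2 m n t)ᵀ * (J2 n * U2 n) + (TBT m n t)ᵀ * fromCols (M32 m n * flipU n) 0 := by
  rw [Pi2, mul_fromCols, UmnM_mul_M12, UmnM_mul_M32, PiHat2, transpose_fromRows, J2_mul_U2,
    fromCols_mul_fromBlocks, mul_fromCols, fromCols_add_fromCols]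
  simp only [Matrix.mul_zero, Matrix.mul_neg, add_zero, zero_add, Matrix.mul_assoc]

lemma UmnM_mul_inv_TBT_mul {κ κ' : Type*} [Fintype κ'] {m n : ℕ} {t : ℤ → ℤ → ℂ}
    (hT : IsUnit (TBT m n t)) {P : Matrix (Fin n × Fin m) κ ℂ} {P' : Matrix κ' (Fin n × Fin m) ℂ}
    {Q : Matrix κ' κ ℂ} {C : Matrix (Fin n × Fin m) κ ℂ}
    (h : UmnM m n * P = P'ᵀ * Q + (TBT m n t)ᵀ * C) :
    UmnM m n * ((TBT m n t)⁻¹ * P) = (P' * (TBT m n t)⁻¹)ᵀ * Q + C := by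
  rw [← Matrix.mul_assoc, UmnM_mul_inv_TBT m n t hT, Matrix.mul_assoc, h, Matrix.mul_add,
    ← Matrix.mul_assoc, ← Matrix.mul_assoc, ← transpose_mul, ← transpose_mul,
    mul_nonsing_inv _ ((isUnit_iff_isUnit_det _).mp hT), transpose_one, Matrix.one_mul]

def flipCorrection (m n : ℕ) :
    Matrix (Fin n × Fin m) ((Fin m ⊕ Fin m) ⊕ (Fin n ⊕ Fin n)) ℂ :=
  fromCols (fromCols (EcolId m n * flipU m) 0) (fromCols (M32 m n * flipU n) 0)

lemma UmnM_mul_GammaFull (m n : ℕ) (t : ℤ → ℤ → ℂ) (hT : IsUnit (TBT m n t)) :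
    UmnM m n * GammaFull m n t = (GammaHatFull m n t)ᵀ * DJU m n + flipCorrection m n := by
  rw [GammaFull, mul_fromCols, Gam1, Gam2, UmnM_mul_inv_TBT_mul hT (UmnM_mul_Pi1 m n t),
    UmnM_mul_inv_TBT_mul hT (UmnM_mul_Pi2 m n t), GammaHatFull, transpose_fromRows, DJU,
    fromCols_mul_fromBlocks, flipCorrection, fromCols_add_fromCols, GamHat1, GamHat2]
  simp only [Matrix.mul_zero, add_zero, zero_add]

lemma resolventVec₂_vecMul_EcolId (m n : ℕ) {l₁ : ℂ} (hl₁ : l₁ ≠ I / 2) (l₂ : ℂ) :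
    resolventVec₂ m n l₁ l₂ ᵥ* EcolId m n = (I * (psiM l₁ ^ n - 1)) • resolventVec m l₂ := by
  funext j
  simp [vecMul, dotProduct, EcolId, resolventVec₂, Fintype.sum_prod_type, ← sum_mul,
    sum_resolventVec n hl₁]

lemma resolventVec₂_vecMul_M32 (m n : ℕ) (l₁ : ℂ) {l₂ : ℂ} (hl₂ : l₂ ≠ I / 2) :
    resolventVec₂ m n l₁ l₂ ᵥ* M32 m n = (I * (psiM l₂ ^ m - 1)) • resolventVec n l₁ := by
  funext q
  simp [vecMul, dotProduct, M32, M22, resolventVec₂, Fintype.sum_prod_type, ← sum_mul,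
    sum_resolventVec m hl₂, mul_comm]

lemma sumElim_zero_vecMul_J2_mul_U2 (k : ℕ) (w : Fin k → ℂ) :
    Sum.elim 0 w ᵥ* (J2 k * U2 k) = Sum.elim (-(w ∘ Fin.rev)) 0 := by
  rw [J2_mul_U2, vecMul_fromBlocks]
  simp [vecMul_neg, vecMul_flipU]

lemma phiM_smul_vecMul_flipCorrection_sub (m n : ℕ) {u₁ u₂ : ℂ} (hu₁ : u₁ ≠ I / 2)
    (hu₁' : u₁ ≠ -(I / 2)) (hu₂ : u₂ ≠ I / 2) (hu₂' : u₂ ≠ -(I / 2)) :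
    (phiM u₁ ^ n * phiM u₂ ^ m) • (resolventVec₂ m n u₁ u₂ ᵥ* flipCorrection m n)
      - I • Sum.elim
        (Sum.elim (star (onesV (Fin m)) ᵥ* ((calA2 m)ᴴ - u₂ • 1)⁻¹) (0 : Fin m → ℂ))
        (Sum.elim (star (onesV (Fin n)) ᵥ* ((calA1 n)ᴴ - u₁ • 1)⁻¹) (0 : Fin n → ℂ))
    = (phiM u₁ ^ n * phiM u₂ ^ m) • ((I • Sum.elim
        (Sum.elim (0 : Fin m → ℂ) ((calA2 m - u₂ • 1)⁻¹ *ᵥ onesV (Fin m)))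
        (Sum.elim (0 : Fin n → ℂ) ((calA1 n - u₁ • 1)⁻¹ *ᵥ onesV (Fin n)))) ᵥ* DJU m n) := by
  rw [flipCorrection, calA1_eq_calA2, star_onesV, star_onesV,
    ones_vecMul_inv_conjTranspose_calA2_sub_smul m hu₂',
    ones_vecMul_inv_conjTranspose_calA2_sub_smul n hu₁', inv_calA2_sub_smul_mulVec_ones m hu₂,
    inv_calA2_sub_smul_mulVec_ones n hu₁, resolventVec_neg m hu₂ hu₂',
    resolventVec_neg n hu₁ hu₁',
    vecMul_fromCols, vecMul_fromCols, vecMul_fromCols, ← vecMul_vecMul, ← vecMul_vecMul,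
    resolventVec₂_vecMul_EcolId m n hu₁, resolventVec₂_vecMul_M32 m n u₁ hu₂, smul_vecMul I,
    DJU, vecMul_fromBlocks]
  simp only [vecMul_zero, Sum.elim_comp_inl, Sum.elim_comp_inr, add_zero, zero_add,
    sumElim_zero_vecMul_J2_mul_U2, vecMul_flipU]
  have h₁ : phiM u₁ ^ n * psiM u₁ ^ n = 1 := by
    rw [← mul_pow, phiM_mul_psiM hu₁ hu₁', one_pow]
  have h₂ : phiM u₂ ^ m * psiM u₂ ^ m = 1 := by
    rw [← mul_pow, phiM_mul_psiM hu₂ hu₂', one_pow]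
  ext ((j | j) | (j | j))
  · simp only [neg_smul, neg_neg, Pi.sub_apply, Pi.smul_apply, Sum.elim_inl, Function.comp_apply,
      smul_eq_mul, Pi.neg_apply, mul_neg]
    linear_combination (I * phiM u₂ ^ m * resolventVec m u₂ j.rev) * h₁
  · simp
  · simp only [neg_smul, neg_neg, Pi.sub_apply, Pi.smul_apply, Sum.elim_inr, Sum.elim_inl,
      Function.comp_apply, smul_eq_mul, Pi.neg_apply, mul_neg]
    linear_combination (I * phiM u₁ ^ n * resolventVec n u₁ j.rev) * h₂
  · simp

theorem u_from_uHat_general (m n : ℕ) (t : ℤ → ℤ → ℂ)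
    (hT : IsUnit (TBT m n t)) (u1 u2 : ℂ)
    (hu1 : u1 ≠ Complex.I / 2) (hu1' : u1 ≠ -(Complex.I / 2))
    (hu2 : u2 ≠ Complex.I / 2) (hu2' : u2 ≠ -(Complex.I / 2)) :
    uRow m n t u1 u2
      = (((u1 - Complex.I / 2) / (u1 + Complex.I / 2)) ^ n *
          ((u2 - Complex.I / 2) / (u2 + Complex.I / 2)) ^ m) •
          (uHatCol m n t u1 u2 ᵥ* DJU m n) := by
  change _ = (phiM u1 ^ n * phiM u2 ^ m) • _
  have hrow : star (onesV (Fin n × Fin m)) ᵥ* (((A1 m n)ᴴ - u1 • 1)⁻¹ * ((A2 m n)ᴴ - u2 • 1)⁻¹)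
      = (phiM u1 ^ n * phiM u2 ^ m) • (resolventVec₂ m n u1 u2 ᵥ* UmnM m n) := by
    rw [star_onesV, ones_vecMul_inv_conjTranspose_A1_sub_smul_mul m n hu1' hu2',
      resolventVec₂_neg m n hu1 hu1' hu2 hu2']
  rw [uRow, ← vecMul_vecMul, hrow, smul_vecMul, vecMul_vecMul, UmnM_mul_GammaFull m n t hT,
    vecMul_add, smul_add, add_sub_assoc,
    phiM_smul_vecMul_flipCorrection_sub m n hu1 hu1' hu2 hu2', ← smul_add, ← vecMul_vecMul,
    vecMul_transpose, ← add_vecMul, uHatCol, Matrix.mul_assoc, ← mulVec_mulVec,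
    inv_A2_sub_smul_mul_inv_A1_sub_smul_mulVec_ones m n hu1 hu2]

/-- `u(μ)` expressed via `û(μ)^τ diag{J_{2m}U_{2m}, J_{2n}U_{2n}}`. -/
theorem u_from_uHat (m n : ℕ) (hm : 0 < m) (hn : 0 < n) (t : ℤ → ℤ → ℂ)
    (hT : IsUnit (TBT m n t)) (u1 u2 : ℂ)
    (hu1 : u1 ≠ Complex.I / 2) (hu1' : u1 ≠ -(Complex.I / 2))
    (hu2 : u2 ≠ Complex.I / 2) (hu2' : u2 ≠ -(Complex.I / 2)) :
    uRow m n t u1 u2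
      = (((u1 - Complex.I / 2) / (u1 + Complex.I / 2)) ^ n *
          ((u2 - Complex.I / 2) / (u2 + Complex.I / 2)) ^ m) •
          (uHatCol m n t u1 u2 ᵥ* DJU m n) :=
  u_from_uHat_general m n t hT u1 u2 hu1 hu1' hu2 hu2'

end
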